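/- Let d, d', k be positive integers. Then lcm(o_d(k), o_{d'}(k)) = o_{lcm(d,d')}(k) and gcd(o_d(k), o_{d'}(k)) = o_{gcd(d,d')}(k). -/

import Mathlib

/-!
Write `e = p ^ a * m` with `p ∤ m`. If `p ∣ k` and `u ≡ 1 (mod k)`, then
`x = u ^ p ^ a ≡ 1 (mod p)`, so `x ^ m - 1` and `x - 1` have the same `p`-adic valuation;
hence `o_e(k)` and `o_{p^a}(k)` have the same `p`-part. If `p ∤ k`, then `p ∤ o_e(k)`, as `u`
may be taken divisible by `p`. As `d ∣ e` gives `o_d(k) ∣ o_e(k)`, the `p`-part of `o_e(k)` is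
monotone in `v_p(e)`, and taking `v_p` of `lcm d d'` and `gcd d d'` gives the claim.
-/

open scoped DirectSum

noncomputable section

/-- `o_d(k)`: the gcd, taken as a nonnegative integer, of the set
`{u ^ d - 1 | u ≡ 1 (mod k)}`, realized as the nonnegative generator of the ideal of `ℤ`
spanned by this set. -/
def oo (d k : ℕ) : ℕ :=
  (Submodule.IsPrincipal.generator
    (Ideal.span {z : ℤ | ∃ u : ℤ, (k : ℤ) ∣ (u - 1) ∧ z = u ^ d - 1})).natAbs

theorem dvd_oo_iff (d k : ℕ) (m : ℤ) :
    m ∣ (oo d k : ℤ) ↔ ∀ u : ℤ, (k : ℤ) ∣ u - 1 → m ∣ u ^ d - 1 := by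
  rw [oo, Int.dvd_natAbs, ← Ideal.mem_span_singleton, ← Ideal.span_singleton_le_iff_mem,
    Ideal.span_singleton_generator, Ideal.span_le]
  constructor
  · exact fun h u hu ↦ Ideal.mem_span_singleton.mp (h ⟨u, hu, rfl⟩)
  · rintro h _ ⟨u, hu, rfl⟩
    exact Ideal.mem_span_singleton.mpr (h u hu)

theorem oo_dvd_pow_sub_one {u : ℤ} (d : ℕ) {k : ℕ} (hu : (k : ℤ) ∣ u - 1) :
    (oo d k : ℤ) ∣ u ^ d - 1 :=
  (dvd_oo_iff d k _).mp dvd_rfl u hu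

theorem oo_dvd_oo {d e : ℕ} (k : ℕ) (h : d ∣ e) : oo d k ∣ oo e k := by
  obtain ⟨c, rfl⟩ := h
  rw [← Int.natCast_dvd_natCast, dvd_oo_iff]
  intro u hu
  simpa [pow_mul] using (oo_dvd_pow_sub_one d hu).trans (sub_one_dvd_pow_sub_one (u ^ d) c)

theorem dvd_of_prime_dvd_oo {p d k : ℕ} (hp : p.Prime) (hd : d ≠ 0) (h : p ∣ oo d k) :
    p ∣ k := by
  by_contra hpk
  obtain ⟨a, b, hab⟩ : IsCoprime (k : ℤ) p :=
    Nat.isCoprime_iff_coprime.mpr ((hp.coprime_iff_not_dvd.mpr hpk).symm)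
  have hu : (k : ℤ) ∣ b * p - 1 := ⟨-a, by linarith⟩
  have h1 : (p : ℤ) ∣ (b * p) ^ d - 1 :=
    (Int.natCast_dvd_natCast.mpr h).trans (oo_dvd_pow_sub_one d hu)
  have h2 : (p : ℤ) ∣ (b * p) ^ d := dvd_pow (dvd_mul_left _ _) hd
  exact (Nat.prime_iff_prime_int.mp hp).not_dvd_one (by simpa using dvd_sub h2 h1)

theorem prime_pow_dvd_oo_iff {p j e k : ℕ} (hp : p.Prime) (he : e ≠ 0) :
    p ^ j ∣ oo e k ↔ p ^ j ∣ oo (p ^ e.factorization p) k := by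
  refine ⟨fun h ↦ ?_, fun h ↦ h.trans (oo_dvd_oo k (Nat.ordProj_dvd e p))⟩
  rcases Nat.eq_zero_or_pos j with rfl | hj
  · simp
  have hpk : (p : ℤ) ∣ k := Int.natCast_dvd_natCast.mpr <|
    dvd_of_prime_dvd_oo hp he ((dvd_pow_self p hj.ne').trans h)
  have hpZ : Prime (p : ℤ) := Nat.prime_iff_prime_int.mp hp
  rw [← Int.natCast_dvd_natCast, dvd_oo_iff] at h ⊢
  intro u hu
  have hx : (p : ℤ) ∣ u ^ p ^ e.factorization p - 1 :=
    (hpk.trans hu).trans (sub_one_dvd_pow_sub_one u _)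
  have hx1 : ¬ (p : ℤ) ∣ u ^ p ^ e.factorization p := fun h' ↦
    hpZ.not_dvd_one (by simpa using dvd_sub h' hx)
  have hm : ¬ (p : ℤ) ∣ (ordCompl[p] e : ℕ) := by
    exact_mod_cast Nat.not_dvd_ordCompl hp he
  have hval := emultiplicity_pow_sub_pow_of_prime hpZ (y := 1) (by simpa using hx) hx1 hm
  rw [one_pow] at hval
  have hdvd := h u hu
  rw [← Nat.ordProj_mul_ordCompl_eq_self e p, pow_mul] at hdvd
  push_cast at hdvd ⊢
  rwa [pow_dvd_iff_le_emultiplicity, hval, ← pow_dvd_iff_le_emultiplicity] at hdvd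

theorem prime_pow_dvd_oo_lcm {p j d d' k : ℕ} (hp : p.Prime) (hd : d ≠ 0) (hd' : d' ≠ 0)
    (h : p ^ j ∣ oo (d.lcm d') k) : p ^ j ∣ oo d k ∨ p ^ j ∣ oo d' k := by
  rw [prime_pow_dvd_oo_iff hp (Nat.lcm_ne_zero hd hd'), Nat.factorization_lcm hd hd',
    Finsupp.sup_apply] at h
  rcases le_total (d.factorization p) (d'.factorization p) with hle | hle
  · rw [sup_eq_right.mpr hle, ← prime_pow_dvd_oo_iff hp hd'] at h
    exact .inr h
  · rw [sup_eq_left.mpr hle, ← prime_pow_dvd_oo_iff hp hd] at h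
    exact .inl h

theorem prime_pow_dvd_oo_gcd {p j d d' k : ℕ} (hp : p.Prime) (hd : d ≠ 0) (hd' : d' ≠ 0)
    (h : p ^ j ∣ oo d k) (h' : p ^ j ∣ oo d' k) : p ^ j ∣ oo (d.gcd d') k := by
  rw [prime_pow_dvd_oo_iff hp (Nat.gcd_ne_zero_left hd), Nat.factorization_gcd hd hd',
    Finsupp.inf_apply]
  rcases le_total (d.factorization p) (d'.factorization p) with hle | hle
  · rwa [inf_eq_left.mpr hle, ← prime_pow_dvd_oo_iff hp hd]
  · rwa [inf_eq_right.mpr hle, ← prime_pow_dvd_oo_iff hp hd']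

theorem stmt14_general (d d' k : ℕ) (hd : 0 < d) (hd' : 0 < d') :
    Nat.lcm (oo d k) (oo d' k) = oo (Nat.lcm d d') k ∧
      Nat.gcd (oo d k) (oo d' k) = oo (Nat.gcd d d') k := by
  refine ⟨Nat.dvd_antisymm ?_ ?_, Nat.dvd_antisymm ?_ ?_⟩
  · exact Nat.lcm_dvd (oo_dvd_oo k (Nat.dvd_lcm_left d d')) (oo_dvd_oo k (Nat.dvd_lcm_right d d'))
  · refine (Nat.dvd_iff_prime_pow_dvd_dvd _ _).mpr fun p j hp h ↦ ?_
    rcases prime_pow_dvd_oo_lcm hp hd.ne' hd'.ne' h with h | h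
    · exact h.trans (Nat.dvd_lcm_left _ _)
    · exact h.trans (Nat.dvd_lcm_right _ _)
  · refine (Nat.dvd_iff_prime_pow_dvd_dvd _ _).mpr fun p j hp h ↦ ?_
    exact prime_pow_dvd_oo_gcd hp hd.ne' hd'.ne' (h.trans (Nat.gcd_dvd_left _ _))
      (h.trans (Nat.gcd_dvd_right _ _))
  · exact Nat.dvd_gcd (oo_dvd_oo k (Nat.gcd_dvd_left d d')) (oo_dvd_oo k (Nat.gcd_dvd_right d d'))

theorem stmt14 (d d' k : ℕ) (hd : 0 < d) (hd' : 0 < d') (hk : 0 < k) :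
    Nat.lcm (oo d k) (oo d' k) = oo (Nat.lcm d d') k ∧
      Nat.gcd (oo d k) (oo d' k) = oo (Nat.gcd d d') k :=
  stmt14_general d d' k hd hd'

end
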